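/- arXiv:1906.02069 — 4 statements merged into one kernel-verified Lean document; each statement's English description precedes it below -/
import Mathlib

section
/- For Shamir sharing with threshold t over F_p: if the sharing polynomial q of degree ≤ t with q(0) = s is chosen uniformly at random among all such polynomials, then for any set T of at most t indices from {1,…,n}, the vector of shares (q(i))_{i∈T} is uniformly distributed over F_p^{|T|}, independent of the secret s. -/
/-!
Put `S = {0} ∪ T`. The sharings realising the shares `v` on `T` are exactly the polynomials of
degree `< t + 1` taking prescribed values on the `|T| + 1` distinct nodes `S`. Those are
`L + N * g`, where `L` is the Lagrange interpolant of the data on `S`, `N = ∏_{x ∈ S} (X - x)`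
is the nodal polynomial, and `g` ranges over the polynomials of degree `< t - |T|`; this
parametrisation is injective, so there are `p ^ (t - |T|)` of them, whatever `s` and `v` are.
-/

open Polynomial Finset Lagrange

theorem Polynomial.ncard_degreeLT (R : Type*) [Semiring R] [Finite R] (n : ℕ) :
    (degreeLT R n : Set R[X]).ncard = Nat.card R ^ n := by
  rw [← Nat.card_coe_set_eq, SetLike.coe_sort_coe,
    Nat.card_congr (degreeLTEquiv R n).toEquiv, Nat.card_fun, Nat.card_fin]

namespace Lagrange

theorem degree_nodal_mul_lt_iff {ι R : Type*} [CommRing R] [IsDomain R] {s : Finset ι}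
    {v : ι → R} {g : R[X]} {d : ℕ} (hd : #s ≤ d) :
    (nodal s v * g).degree < d ↔ g.degree < ↑(d - #s) := by
  rcases eq_or_ne g 0 with rfl | hg
  · simp
  rw [degree_mul, degree_nodal, degree_eq_natDegree hg]
  norm_cast
  omega

variable {F ι : Type*} [Field F] {s : Finset ι} {v : ι → F}

theorem nodal_dvd_of_eval_eq_zero (hvs : Set.InjOn v s) {q : F[X]}
    (hq : ∀ i ∈ s, q.eval (v i) = 0) : nodal s v ∣ q := by
  rw [nodal_eq]
  refine Finset.prod_dvd_of_coprime (fun i hi j hj hij => ?_) fun i hi => ?_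
  · exact isCoprime_X_sub_C_of_isUnit_sub (sub_ne_zero_of_ne (hvs.ne hi hj hij)).isUnit
  · exact dvd_iff_isRoot.mpr (hq i hi)

variable [DecidableEq ι]

theorem setOf_degree_lt_eval_eq (hvs : Set.InjOn v s) (r : ι → F) {d : ℕ} (hd : #s ≤ d) :
    {q : F[X] | q.degree < d ∧ ∀ i ∈ s, q.eval (v i) = r i} =
      (fun g => interpolate s v r + nodal s v * g) '' (degreeLT F (d - #s) : Set F[X]) := by
  have hL : (interpolate s v r).degree < d :=
    (degree_interpolate_lt r hvs).trans_le (by exact_mod_cast hd)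
  ext q
  simp only [Set.mem_ofPred_eq, Set.mem_image, SetLike.mem_coe, mem_degreeLT]
  constructor
  · rintro ⟨hqd, hqr⟩
    obtain ⟨g, hg⟩ : nodal s v ∣ q - interpolate s v r :=
      nodal_dvd_of_eval_eq_zero hvs fun i hi => by
        rw [eval_sub, hqr i hi, eval_interpolate_at_node r hvs hi, sub_self]
    refine ⟨g, (degree_nodal_mul_lt_iff (v := v) hd).mp ?_, by rw [← hg, add_sub_cancel]⟩
    rw [← hg]
    exact (degree_sub_le _ _).trans_lt (max_lt hqd hL)
  · rintro ⟨g, hgd, rfl⟩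
    refine ⟨(degree_add_le _ _).trans_lt (max_lt hL ((degree_nodal_mul_lt_iff hd).mpr hgd)),
      fun i hi => ?_⟩
    rw [eval_add, eval_mul, eval_nodal_at_node hi, zero_mul, add_zero,
      eval_interpolate_at_node r hvs hi]

theorem ncard_setOf_degree_lt_eval_eq [Finite F] (hvs : Set.InjOn v s) (r : ι → F) {d : ℕ}
    (hd : #s ≤ d) :
    {q : F[X] | q.degree < d ∧ ∀ i ∈ s, q.eval (v i) = r i}.ncard = Nat.card F ^ (d - #s) := by
  rw [setOf_degree_lt_eval_eq hvs r hd, Set.ncard_image_of_injective _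
    fun g h hgh => mul_left_cancel₀ nodal_ne_zero (add_left_cancel hgh), ncard_degreeLT]

end Lagrange

theorem stmt_1_general (p n t : ℕ) (hp : p.Prime) (hn : n < p)
    (s : ZMod p) (T : Finset ℕ) (hT : T ⊆ Finset.Icc 1 n) (hTcard : T.card ≤ t)
    (v : ℕ → ZMod p) :
    {q : Polynomial (ZMod p) | q.natDegree ≤ t ∧ q.eval 0 = s ∧
      ∀ i ∈ T, q.eval (i : ZMod p) = v i}.ncard = p ^ (t - T.card) := by
  have : Fact p.Prime := ⟨hp⟩
  have hT0 : 0 ∉ T := fun h => by simpa using (mem_Icc.mp (hT h)).1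
  have hlt : ∀ i ∈ insert 0 T, i < p := by
    simp only [mem_insert, forall_eq_or_imp]
    exact ⟨hp.pos, fun i hi => (mem_Icc.mp (hT hi)).2.trans_lt hn⟩
  have hinj : Set.InjOn (Nat.cast : ℕ → ZMod p) ↑(insert 0 T) := fun i hi j hj hij => by
    rwa [ZMod.natCast_eq_natCast_iff', Nat.mod_eq_of_lt (hlt i hi),
      Nat.mod_eq_of_lt (hlt j hj)] at hij
  have hshares : {q : Polynomial (ZMod p) | q.natDegree ≤ t ∧ q.eval 0 = s ∧
      ∀ i ∈ T, q.eval (i : ZMod p) = v i} =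
      {q | q.degree < ↑(t + 1) ∧
        ∀ i ∈ insert 0 T, q.eval (i : ZMod p) = Function.update v 0 s i} := by
    ext q
    simp only [Set.mem_ofPred_eq, ← mem_degreeLT, degreeLT_succ_eq_degreeLE, mem_degreeLE,
      natDegree_le_iff_degree_le, forall_mem_insert, Nat.cast_zero, Function.update_self]
    exact and_congr_right' <| and_congr_right' <| forall₂_congr fun i hi => by
      rw [Function.update_of_ne (ne_of_mem_of_not_mem hi hT0)]
  rw [hshares, ncard_setOf_degree_lt_eval_eq hinj _ (by rw [card_insert_of_notMem hT0]; omega),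
    card_insert_of_notMem hT0, Nat.card_zmod, Nat.add_sub_add_right]

/-- For Shamir sharing with threshold t over F_p, for any set T of at most t
evaluation points among 1,…,n, any secret s, and any target share vector v,
the number of sharing polynomials (degree ≤ t, q(0) = s) realizing v on T is
p^(t - |T|); hence the shares on T are uniformly distributed over F_p^{|T|},
independent of the secret s. -/
theorem stmt_1 (p n t : ℕ) (hp : p.Prime) (hn : n < p) (ht : t < n)
    (s : ZMod p) (T : Finset ℕ) (hT : T ⊆ Finset.Icc 1 n) (hTcard : T.card ≤ t)
    (v : ℕ → ZMod p) :
    {q : Polynomial (ZMod p) | q.natDegree ≤ t ∧ q.eval 0 = s ∧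
      ∀ i ∈ T, q.eval (i : ZMod p) = v i}.ncard = p ^ (t - T.card) :=
  stmt_1_general p n t hp hn s T hT hTcard v
end

section
/- Let U₁,…,Uₙ be accumulative sets arising from n concurrent t-resilient VSS invocations with n > 3t malicious-bounded agents, where U_i(h,m) is the set of dealers j whose sharing phase agent i has completed by time m in history h. Then the tuple (U₁,…,Uₙ) is (n−t, n)-uniform: each U_i is always contained in {1,…,n}, eventually reaches size at least n−t for every honest agent i, and for every pair of honest agents i,j there is a time after which U_i and U_j coincide. -/
open Classical in
/-- Helper: a monotone family bounded in `Finset.Icc 1 n` eventually equals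
the set of elements that ever appear. -/
lemma stmt_5_aux (n : ℕ) (V : ℕ → Finset ℕ) (hmono : Monotone V)
    (hb : ∀ m, V m ⊆ Finset.Icc 1 n) :
    ∃ N, ∀ m ≥ N, V m = (Finset.Icc 1 n).filter (fun j => ∃ m', j ∈ V m') := by
  classical
  set S := (Finset.Icc 1 n).filter (fun j => ∃ m', j ∈ V m') with hS
  have hchoice : ∀ j ∈ S, ∃ m', j ∈ V m' := by
    intro j hj
    exact (Finset.mem_filter.mp hj).2
  -- take N = sup of witnesses
  refine ⟨S.sup (fun j => if h : ∃ m', j ∈ V m' then h.choose else 0), ?_⟩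
  intro m hm
  apply Finset.Subset.antisymm
  · intro j hj
    exact Finset.mem_filter.mpr ⟨hb m hj, m, hj⟩
  · intro j hj
    have h := hchoice j hj
    have hle : (if h' : ∃ m', j ∈ V m' then h'.choose else 0) ≤ m :=
      (Finset.le_sup (f := fun j => if h : ∃ m', j ∈ V m' then h.choose else 0) hj).trans hm
    rw [dif_pos h] at hle
    exact hmono hle h.choose_spec

/-- Accumulative sets arising from n concurrent t-resilient VSS invocations
with n > 3t are (n-t, n)-uniform: for every honest agent i, U i m ⊆ {1,…,n}
always, |U i m| eventually reaches n-t, and for all honest i, j the sets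
U i and U j eventually coincide. -/
theorem stmt_5 (n t : ℕ) (hnt : 3 * t < n)
    (Honest : Finset ℕ) (hH : Honest ⊆ Finset.Icc 1 n)
    (hHcard : n - t ≤ Honest.card)
    (U : ℕ → ℕ → Finset ℕ)
    (hmono : ∀ i, Monotone (U i))
    (hbound : ∀ i ∈ Honest, ∀ m, U i m ⊆ Finset.Icc 1 n)
    (hcomplete : ∀ i ∈ Honest, ∀ j ∈ Honest, ∃ m, j ∈ U i m)
    (hagree : ∀ i ∈ Honest, ∀ j : ℕ, (∃ m, j ∈ U i m) →
      ∀ i' ∈ Honest, ∃ m, j ∈ U i' m) :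
    ∀ i ∈ Honest,
      (∀ m, U i m ⊆ Finset.Icc 1 n) ∧
      (∃ m, n - t ≤ (U i m).card) ∧
      (∀ j ∈ Honest, ∃ m0, ∀ m ≥ m0, U i m = U j m) := by
  classical
  intro i hi
  refine ⟨hbound i hi, ?_, ?_⟩
  · -- eventually all honest dealers are in U i
    have h := stmt_5_aux n (U i) (hmono i) (hbound i hi)
    obtain ⟨N, hN⟩ := h
    refine ⟨N, ?_⟩
    calc n - t ≤ Honest.card := hHcard
      _ ≤ (U i N).card := by
        apply Finset.card_le_card
        intro j hj
        rw [hN N le_rfl]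
        obtain ⟨m, hm⟩ := hcomplete i hi j hj
        exact Finset.mem_filter.mpr ⟨hH hj, m, hm⟩
  · intro j hj
    obtain ⟨N1, hN1⟩ := stmt_5_aux n (U i) (hmono i) (hbound i hi)
    obtain ⟨N2, hN2⟩ := stmt_5_aux n (U j) (hmono j) (hbound j hj)
    refine ⟨max N1 N2, fun m hm => ?_⟩
    rw [hN1 m (le_trans (le_max_left _ _) hm), hN2 m (le_trans (le_max_right _ _) hm)]
    ext k
    simp only [Finset.mem_filter, and_congr_right_iff]
    intro hk
    constructor
    · intro h; exact hagree i hi k h j hj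
    · intro h; exact hagree j hj k h i hi
end

section
/- If an honest agent j shares a message μ using VSS invocation (VSS,j,ℓ) in protocol π', then there is exactly one round k for which the consensus protocol p_{j,ℓ,k} outputs 1, and hence μ is appended to the simulated mediator history h_{d,k+1}; in particular every message shared by an honest agent eventually appears in some h_{d,k}. -/
/-- If an honest agent shares a message via VSS (so every honest agent
eventually terminates the invocation), then exactly one round k has
consensus output 1, and hence the message is appended to the simulated
mediator history h_{d,k+1}. -/
theorem stmt_8 (Agent : Type) (Honest : Finset Agent) (hne : Honest.Nonempty)
    (term : Agent → ℕ → Prop)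
    (hmono : ∀ i k k', k ≤ k' → term i k → term i k')
    (hterm : ∀ i ∈ Honest, ∃ k, term i k)
    (input : Agent → ℕ → Bool) (out : ℕ → Bool)
    (hrule : ∀ i ∈ Honest, ∀ k,
      input i k = true ↔ (term i k ∧ ∀ k' < k, out k' = false))
    (hvalid0 : ∀ k, (∀ i ∈ Honest, input i k = false) → out k = false)
    (hvalid1 : ∀ k, (∀ i ∈ Honest, input i k = true) → out k = true)
    (appended : ℕ → Prop)
    (happend : ∀ k, out k = true → appended (k + 1)) :
    (∃! k, out k = true) ∧ ∃ k, appended k := by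
  classical
  -- If out is true at two rounds, they must coincide.
  have huniq : ∀ k1 k2, out k1 = true → out k2 = true → k1 = k2 := by
    have key : ∀ k1 k2, k1 < k2 → out k1 = true → out k2 = false := by
      intro k1 k2 hlt h1
      apply hvalid0
      intro i hi
      by_contra h
      have h' : input i k2 = true := by
        cases hx : input i k2 with
        | false => exact absurd hx h
        | true => rfl
      obtain ⟨_, hall⟩ := (hrule i hi k2).1 h'
      exact absurd h1 (by simp [hall k1 hlt])
    intro k1 k2 h1 h2
    rcases lt_trichotomy k1 k2 with h | h | h
    · exact absurd h2 (by simp [key k1 k2 h h1])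
    · exact h
    · exact absurd h1 (by simp [key k2 k1 h h2])
  -- A round by which all honest agents have terminated.
  set g : Agent → ℕ := fun i => if h : i ∈ Honest then (hterm i h).choose else 0 with hg
  set K : ℕ := Honest.sup g with hK
  have htermK : ∀ i ∈ Honest, term i K := by
    intro i hi
    have h1 : term i (g i) := by
      simp only [hg, dif_pos hi]
      exact (hterm i hi).choose_spec
    exact hmono i (g i) K (Finset.le_sup hi) h1
  -- Existence of a round with output true.
  have hex : ∃ k, out k = true := by
    by_contra hno
    push_neg at hno
    have hallfalse : ∀ k, out k = false := by
      intro k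
      cases hx : out k with
      | false => rfl
      | true => exact absurd hx (hno k)
    have : out K = true := by
      apply hvalid1
      intro i hi
      exact (hrule i hi K).2 ⟨htermK i hi, fun k' _ => hallfalse k'⟩
    exact hno K this
  obtain ⟨k, hk⟩ := hex
  exact ⟨⟨k, hk, fun y hy => huniq y k hy hk⟩, k + 1, happend k hk⟩
end

section
/- Fix a prime p and threshold t < n. Suppose honest agents in a set I with |I| ≥ 2t+1 hold shares of a secret under degree-t Shamir sharing, and an adversary controlling a set T with |T| ≤ t and T ∩ I = ∅ substitutes arbitrary values for its own shares. Then for any value s', the set of full share vectors that extend the honest shares in I is a singleton, and the adversary cannot change the reconstructed secret: reconstruction from any n − t shares that include all of I yields the true secret. -/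
lemma shamir_poly_eq (p t : ℕ) (A : Finset ℕ) (hA : ∀ i ∈ A, i < p)
    (hAcard : t + 1 ≤ A.card) [Fact p.Prime]
    (q q' : Polynomial (ZMod p)) (hq : q.natDegree ≤ t) (hq' : q'.natDegree ≤ t)
    (h : ∀ i ∈ A, q.eval (i : ZMod p) = q'.eval (i : ZMod p)) : q = q' := by
  have hinj : Set.InjOn (fun i : ℕ => (i : ZMod p)) A := by
    intro i hi j hj hij
    simp only at hij
    have : (i : ZMod p).val = (j : ZMod p).val := by rw [hij]
    rwa [ZMod.val_natCast_of_lt (hA i hi), ZMod.val_natCast_of_lt (hA j hj)] at this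
  have hz : q - q' = 0 := by
    apply Polynomial.eq_zero_of_natDegree_lt_card_of_eval_eq_zero' _ (A.image (Nat.cast))
    · intro x hx
      simp only [Finset.mem_image] at hx
      obtain ⟨i, hi, rfl⟩ := hx
      simp [h i hi]
    · rw [Finset.card_image_of_injOn hinj]
      calc (q - q').natDegree ≤ max q.natDegree q'.natDegree := Polynomial.natDegree_sub_le _ _
        _ ≤ t := max_le hq hq'
        _ < t + 1 := Nat.lt_succ_self t
        _ ≤ A.card := hAcard
  exact sub_eq_zero.mp hz

/-- With |I| ≥ 2t+1 honest consistent shares of a degree-≤t Shamir sharing q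
and an adversary coalition Tm (|Tm| ≤ t, disjoint from I) substituting
arbitrary shares: the full share vector extending the honest shares of I is
unique, and reconstruction from any set J of at least n - t shares containing
I via any degree-≤t interpolating polynomial yields the true secret q(0). -/
theorem stmt_19 (p n t : ℕ) (hp : p.Prime) (hn : n < p)
    (I Tm : Finset ℕ) (hI : I ⊆ Finset.Icc 1 n) (hIcard : 2 * t + 1 ≤ I.card)
    (hTm : Tm ⊆ Finset.Icc 1 n) (hTmcard : Tm.card ≤ t)
    (hdisj : Disjoint Tm I)
    (q : Polynomial (ZMod p)) (hq : q.natDegree ≤ t) :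
    (∃! S' : ℕ → ZMod p,
      (∀ i, i ∉ Finset.Icc 1 n → S' i = 0) ∧
      (∀ i ∈ I, S' i = q.eval (i : ZMod p)) ∧
      ∃ q' : Polynomial (ZMod p), q'.natDegree ≤ t ∧
        ∀ i ∈ Finset.Icc 1 n, q'.eval (i : ZMod p) = S' i) ∧
    (∀ (J : Finset ℕ) (S : ℕ → ZMod p),
      I ⊆ J → J ⊆ Finset.Icc 1 n → n - t ≤ J.card →
      (∀ i ∈ I, S i = q.eval (i : ZMod p)) →
      ∀ q' : Polynomial (ZMod p), q'.natDegree ≤ t →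
        (∀ i ∈ J, q'.eval (i : ZMod p) = S i) →
        q'.eval 0 = q.eval 0) := by
  haveI : Fact p.Prime := ⟨hp⟩
  have hIlt : ∀ i ∈ I, i < p := fun i hi =>
    lt_of_le_of_lt (Finset.mem_Icc.mp (hI hi)).2 hn
  have hIt : t + 1 ≤ I.card := le_trans (by omega) hIcard
  constructor
  · refine ⟨fun i => if i ∈ Finset.Icc 1 n then q.eval (i : ZMod p) else 0, ?_, ?_⟩
    · refine ⟨fun i hi => if_neg hi, fun i hi => if_pos (hI hi), q, hq, fun i hi => (if_pos hi).symm⟩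
    · rintro S' ⟨hS0, hSI, q', hq', hq'eval⟩
      have hqq : q = q' := by
        apply shamir_poly_eq p t I hIlt hIt q q' hq hq'
        intro i hi
        rw [hq'eval i (hI hi), hSI i hi]
      funext i
      by_cases hi : i ∈ Finset.Icc 1 n
      · rw [if_pos hi, ← hq'eval i hi, hqq]
      · rw [if_neg hi, hS0 i hi]
  · intro J S hIJ hJ hJcard hSI q' hq' hq'J
    have hqq : q = q' := by
      apply shamir_poly_eq p t I hIlt hIt q q' hq hq'
      intro i hi
      rw [hq'J i (hIJ hi), hSI i hi]
    rw [hqq]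
end
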